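/- Let G=(V,ξ) be a bipartite graph with V nonempty (i.e., there is a 2-coloring of V such that every edge of G joins the two color classes). Then no vector α of positive reals satisfies Ncond for G. -/

import Mathlib

/- Each colour class of a bipartite graph is independent and its neighbourhood lies in the
other class, so Ncond would give α(A) < α(B) and α(B) ≤ α(A) for a nonempty class A (an empty
class has weight 0). -/

open Classical Finset

noncomputable section

def nbr {V : Type} [Fintype V] (G : SimpleGraph V) (S : Finset V) : Finset V :=
  Finset.univ.filter fun j => ∃ i ∈ S, G.Adj i j

def aSum {V : Type} (α : V → ℝ) (S : Finset V) : ℝ := ∑ i ∈ S, α i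

def IsIndep {V : Type} (G : SimpleGraph V) (I : Finset V) : Prop :=
  I.Nonempty ∧ ∀ i ∈ I, ∀ j ∈ I, ¬ G.Adj i j

def indepSets {V : Type} [Fintype V] (G : SimpleGraph V) : Finset (Finset V) :=
  Finset.univ.filter fun I => IsIndep G I

def Ncond {V : Type} [Fintype V] (G : SimpleGraph V) (α : V → ℝ) : Prop :=
  ∀ I ∈ indepSets G, aSum α I < aSum α (nbr G I)

def Tlist {V : Type} [Fintype V] [DecidableEq V] (G : SimpleGraph V) (α : V → ℝ) :
    List V → Finset V → ℝ
  | [], _ => 1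
  | i :: l, P =>
      α i / (aSum α (nbr G (insert i P)) - aSum α (insert i P)) * Tlist G α l (insert i P)

def Erat {V : Type} [Fintype V] [DecidableEq V] (G : SimpleGraph V) (α : V → ℝ) :
    List V → Finset V → ℝ
  | [], _ => 0
  | i :: l, P =>
      aSum α (nbr G (insert i P)) / (aSum α (nbr G (insert i P)) - aSum α (insert i P)) +
        Erat G α l (insert i P)

def TI {V : Type} [Fintype V] [DecidableEq V] (G : SimpleGraph V) (α : V → ℝ) (I : Finset V) : ℝ :=
  ∑ l ∈ I.toList.permutations.toFinset, Tlist G α l ∅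

def EI {V : Type} [Fintype V] [DecidableEq V] (G : SimpleGraph V) (α : V → ℝ) (I : Finset V) : ℝ :=
  ∑ l ∈ I.toList.permutations.toFinset, Erat G α l ∅ * Tlist G α l ∅

def meanQ {V : Type} [Fintype V] [DecidableEq V] (G : SimpleGraph V) (α : V → ℝ) : ℝ :=
  (1 + ∑ I ∈ indepSets G, TI G α I)⁻¹ * ∑ I ∈ indepSets G, EI G α I

def IsWord {V : Type} (G : SimpleGraph V) (w : List V) : Prop :=
  w.Pairwise fun a b => ¬ G.Adj a b

def piHatAux {V : Type} [Fintype V] [DecidableEq V] (G : SimpleGraph V) (α : V → ℝ) :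
    List V → Finset V → ℝ
  | [], _ => 1
  | i :: l, P => α i / aSum α (nbr G (insert i P)) * piHatAux G α l (insert i P)

def piHat {V : Type} [Fintype V] [DecidableEq V] (G : SimpleGraph V) (α : V → ℝ) (w : List V) : ℝ :=
  piHatAux G α w ∅

def addEdge {V : Type} (G : SimpleGraph V) (u v : V) : SimpleGraph V :=
  G ⊔ SimpleGraph.fromEdgeSet {s(u, v)}

end

theorem aSum_le_aSum_of_subset {V : Type} {α : V → ℝ} (hα : ∀ i, 0 ≤ α i) {S T : Finset V}
    (h : S ⊆ T) :
    aSum α S ≤ aSum α T :=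
  Finset.sum_le_sum_of_subset_of_nonneg h fun i _ _ => hα i

def colorClass {V β : Type} [Fintype V] [DecidableEq β] (c : V → β) (b : β) : Finset V :=
  univ.filter fun i => c i = b

section Bipartite

variable {V : Type} [Fintype V] {G : SimpleGraph V} {α : V → ℝ}

theorem Ncond.aSum_lt_aSum_nbr (hN : Ncond G α) {I : Finset V} (hI : IsIndep G I) :
    aSum α I < aSum α (nbr G I) :=
  hN I (mem_filter.mpr ⟨mem_univ I, hI⟩)

theorem isIndep_colorClass {β : Type} [DecidableEq β] {c : V → β}
    (hc : ∀ i j, G.Adj i j → c i ≠ c j) {b : β} (hne : (colorClass c b).Nonempty) :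
    IsIndep G (colorClass c b) := by
  refine ⟨hne, fun i hi j hj hij => hc i j hij ?_⟩
  rw [colorClass, mem_filter] at hi hj
  exact hi.2.trans hj.2.symm

theorem nbr_colorClass_subset {c : V → Bool} (hc : ∀ i j, G.Adj i j → c i ≠ c j) (b : Bool) :
    nbr G (colorClass c b) ⊆ colorClass c (!b) := by
  intro j hj
  simp only [nbr, colorClass, mem_filter, mem_univ, true_and] at hj ⊢
  obtain ⟨i, rfl, hij⟩ := hj
  exact Bool.eq_not.mpr (hc i j hij).symm

theorem aSum_colorClass_lt {c : V → Bool} (hc : ∀ i j, G.Adj i j → c i ≠ c j)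
    (hpos : ∀ i, 0 < α i) (hN : Ncond G α) {b : Bool} (hne : (colorClass c b).Nonempty) :
    aSum α (colorClass c b) < aSum α (colorClass c (!b)) :=
  (hN.aSum_lt_aSum_nbr (isIndep_colorClass hc hne)).trans_le
    (aSum_le_aSum_of_subset (fun i => (hpos i).le) (nbr_colorClass_subset hc b))

theorem aSum_colorClass_le {c : V → Bool} (hc : ∀ i j, G.Adj i j → c i ≠ c j)
    (hpos : ∀ i, 0 < α i) (hN : Ncond G α) (b : Bool) :
    aSum α (colorClass c b) ≤ aSum α (colorClass c (!b)) := by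
  obtain hempty | hne := (colorClass c b).eq_empty_or_nonempty
  · rw [hempty]
    exact aSum_le_aSum_of_subset (fun i => (hpos i).le) (empty_subset _)
  · exact (aSum_colorClass_lt hc hpos hN hne).le

end Bipartite

theorem stmt11_general {V : Type} [Fintype V] [Nonempty V] (G : SimpleGraph V)
    (c : V → Bool) (hc : ∀ i j, G.Adj i j → c i ≠ c j) :
    ¬ ∃ α : V → ℝ, (∀ i, 0 < α i) ∧ Ncond G α := by
  rintro ⟨α, hpos, hN⟩
  obtain ⟨v⟩ := ‹Nonempty V›
  have hne : (colorClass c (c v)).Nonempty := ⟨v, mem_filter.mpr ⟨mem_univ v, rfl⟩⟩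
  have hlt := aSum_colorClass_lt hc hpos hN hne
  have hle := aSum_colorClass_le hc hpos hN (!c v)
  rw [Bool.not_not] at hle
  exact hlt.not_ge hle

theorem stmt11 {V : Type} [Fintype V] [DecidableEq V] [Nonempty V] (G : SimpleGraph V)
    (c : V → Bool) (hc : ∀ i j, G.Adj i j → c i ≠ c j) :
    ¬ ∃ α : V → ℝ, (∀ i, 0 < α i) ∧ Ncond G α :=
  stmt11_general G c hc
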